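/- arXiv:2604.23700 — 3 statements merged into one kernel-verified Lean document; each statement's English description precedes it below -/
import Mathlib

section
/- Let G = (V, E) be a legal dag with |In(G)| = t + 1 ≥ 2, and let P be a directed path in G from an input vertex to an output vertex. Let G' be the digraph obtained from G by deleting the edges of P and then deleting all vertices that have become isolated (in-degree and out-degree both 0). Then G' is a legal dag with |In(G')| = |Out(G')| = t. -/
open Finset

variable {V : Type} [Fintype V] [DecidableEq V]

/-- The in-degree of a vertex `v` in the digraph with edge set `E`. -/
def dIn (E : Finset (V × V)) (v : V) : ℕ :=
  (univ.filter fun u => (u, v) ∈ E).card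

/-- The out-degree of a vertex `v` in the digraph with edge set `E`. -/
def dOut (E : Finset (V × V)) (v : V) : ℕ :=
  (univ.filter fun u => (v, u) ∈ E).card

/-- The set of input vertices of the digraph with vertex set `Vs` and edge set
`E`: vertices of in-degree 0. -/
def InSet (Vs : Finset V) (E : Finset (V × V)) : Finset V :=
  Vs.filter fun v => dIn E v = 0

/-- The set of output vertices: vertices of out-degree 0. -/
def OutSet (Vs : Finset V) (E : Finset (V × V)) : Finset V :=
  Vs.filter fun v => dOut E v = 0

/-- A digraph is a dag when there is no directed cycle. -/
def IsDag (E : Finset (V × V)) : Prop :=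
  ∀ v : V, ¬ Relation.TransGen (fun a b : V => (a, b) ∈ E) v v

/-- A legal dag on vertex set `Vs` with edge set `E`: a nonempty dag with all
edges inside `Vs`, in which inputs have out-degree 1, outputs have in-degree 1,
and all other vertices are balanced. -/
def IsLegal (Vs : Finset V) (E : Finset (V × V)) : Prop :=
  (∀ e ∈ E, e.1 ∈ Vs ∧ e.2 ∈ Vs) ∧ E ≠ ∅ ∧ IsDag E ∧
    (∀ v ∈ InSet Vs E, dOut E v = 1) ∧
    (∀ v ∈ OutSet Vs E, dIn E v = 1) ∧
    (∀ v ∈ Vs, v ∉ InSet Vs E → v ∉ OutSet Vs E → dIn E v = dOut E v)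

/-- A directed path: a nonempty list of pairwise distinct vertices in which
consecutive vertices are joined by an edge. -/
def IsDiPath (E : Finset (V × V)) (p : List V) : Prop :=
  p ≠ [] ∧ p.Nodup ∧ p.Chain' (fun a b : V => (a, b) ∈ E)

/-- The list of edges traversed by a path. -/
def pathEdges (p : List V) : List (V × V) :=
  p.zip p.tail

/-!
Deleting the edges of `P` lowers the in-degree of every vertex of `P.tail` and the out-degree of
every vertex of `P.dropLast` by one. An inner vertex of `P` is balanced in `G`, so it stays
balanced; the head `u`, of degrees `(0, 1)`, and the last vertex `w`, of degrees `(1, 0)`, become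
isolated and are removed; every other vertex keeps its degrees. Hence `G'` is legal with
`In(G') = In(G) \ {u}` and `Out(G') = Out(G) \ {w}`; finally `|Out(G)| = |In(G)|`, since in a
legal dag `dOut v + [v ∈ Out] = dIn v + [v ∈ In]` for every vertex and both degree sums are `|E|`.
-/

section Degrees

lemma dIn_eq_card_filter (E : Finset (V × V)) (v : V) : dIn E v = #{e ∈ E | e.2 = v} :=
  card_nbij' (fun u => (u, v)) Prod.fst (fun _ => by simp) (fun _ => by aesop) (fun _ => by simp)
    (fun _ => by aesop)

lemma dOut_eq_card_filter (E : Finset (V × V)) (v : V) : dOut E v = #{e ∈ E | e.1 = v} :=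
  card_nbij' (fun u => (v, u)) Prod.snd (fun _ => by simp) (fun _ => by aesop) (fun _ => by simp)
    (fun _ => by aesop)

lemma sum_dIn (E : Finset (V × V)) : ∑ v, dIn E v = #E := by
  simp_rw [dIn_eq_card_filter]
  exact (card_eq_sum_card_fiberwise fun _ _ => mem_univ _).symm

lemma sum_dOut (E : Finset (V × V)) : ∑ v, dOut E v = #E := by
  simp_rw [dOut_eq_card_filter]
  exact (card_eq_sum_card_fiberwise fun _ _ => mem_univ _).symm

lemma dIn_mono {E F : Finset (V × V)} (h : F ⊆ E) (v : V) : dIn F v ≤ dIn E v :=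
  card_le_card (monotone_filter_right _ fun _ _ hu => h hu)

lemma dOut_mono {E F : Finset (V × V)} (h : F ⊆ E) (v : V) : dOut F v ≤ dOut E v :=
  card_le_card (monotone_filter_right _ fun _ _ hu => h hu)

lemma dIn_sdiff {E F : Finset (V × V)} (h : F ⊆ E) (v : V) :
    dIn (E \ F) v = dIn E v - dIn F v := by
  rw [dIn, dIn, dIn, ← card_sdiff_of_subset (monotone_filter_right _ fun _ _ hu => h hu),
    ← filter_and_not]
  simp only [mem_sdiff]

lemma dOut_sdiff {E F : Finset (V × V)} (h : F ⊆ E) (v : V) :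
    dOut (E \ F) v = dOut E v - dOut F v := by
  rw [dOut, dOut, dOut, ← card_sdiff_of_subset (monotone_filter_right _ fun _ _ hu => h hu),
    ← filter_and_not]
  simp only [mem_sdiff]

lemma dIn_ne_zero_of_mem {E : Finset (V × V)} {u v : V} (h : (u, v) ∈ E) : dIn E v ≠ 0 :=
  (card_pos.mpr ⟨u, by simpa using h⟩).ne'

lemma dOut_ne_zero_of_mem {E : Finset (V × V)} {u v : V} (h : (u, v) ∈ E) : dOut E u ≠ 0 :=
  (card_pos.mpr ⟨v, by simpa using h⟩).ne'

lemma exists_mem_of_dIn_ne_zero {E : Finset (V × V)} {v : V} (h : dIn E v ≠ 0) :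
    ∃ u, (u, v) ∈ E :=
  let ⟨u, hu⟩ := card_ne_zero.mp h
  ⟨u, (mem_filter.mp hu).2⟩

lemma exists_mem_of_dOut_ne_zero {E : Finset (V × V)} {v : V} (h : dOut E v ≠ 0) :
    ∃ u, (v, u) ∈ E :=
  let ⟨u, hu⟩ := card_ne_zero.mp h
  ⟨u, (mem_filter.mp hu).2⟩

lemma dIn_toFinset {L : List (V × V)} (hL : (L.map Prod.snd).Nodup) (v : V) :
    dIn L.toFinset v = if v ∈ L.map Prod.snd then 1 else 0 := by
  split_ifs with hv
  · obtain ⟨e, he, rfl⟩ := List.mem_map.mp hv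
    refine card_eq_one.mpr ⟨e.1, eq_singleton_iff_unique_mem.mpr ⟨by simpa using he, ?_⟩⟩
    intro a ha
    simp only [mem_filter, mem_univ, true_and, List.mem_toFinset] at ha
    exact congrArg Prod.fst (List.inj_on_of_nodup_map hL ha he rfl)
  · exact card_eq_zero.mpr (filter_eq_empty_iff.mpr fun a _ ha =>
      hv (List.mem_map.mpr ⟨_, List.mem_toFinset.mp ha, rfl⟩))

lemma dOut_toFinset {L : List (V × V)} (hL : (L.map Prod.fst).Nodup) (v : V) :
    dOut L.toFinset v = if v ∈ L.map Prod.fst then 1 else 0 := by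
  split_ifs with hv
  · obtain ⟨e, he, rfl⟩ := List.mem_map.mp hv
    refine card_eq_one.mpr ⟨e.2, eq_singleton_iff_unique_mem.mpr ⟨by simpa using he, ?_⟩⟩
    intro a ha
    simp only [mem_filter, mem_univ, true_and, List.mem_toFinset] at ha
    exact congrArg Prod.snd (List.inj_on_of_nodup_map hL ha he rfl)
  · exact card_eq_zero.mpr (filter_eq_empty_iff.mpr fun a _ ha =>
      hv (List.mem_map.mpr ⟨_, List.mem_toFinset.mp ha, rfl⟩))

end Degrees

def nonIsolated (Vs : Finset V) (E : Finset (V × V)) : Finset V :=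
  Vs.filter fun v => ¬(dIn E v = 0 ∧ dOut E v = 0)

section Legal

variable {Vs : Finset V} {E E' : Finset (V × V)} {v : V}

lemma ne_empty_of_mem_nonIsolated (hv : v ∈ nonIsolated Vs E) : E ≠ ∅ := by
  rintro rfl
  exact (mem_filter.mp hv).2 ⟨by simp [dIn], by simp [dOut]⟩

lemma mem_of_dIn_ne_zero (hE : ∀ e ∈ E, e.1 ∈ Vs ∧ e.2 ∈ Vs) (hv : dIn E v ≠ 0) : v ∈ Vs :=
  let ⟨_, hu⟩ := exists_mem_of_dIn_ne_zero hv
  (hE _ hu).2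

lemma mem_of_dOut_ne_zero (hE : ∀ e ∈ E, e.1 ∈ Vs ∧ e.2 ∈ Vs) (hv : dOut E v ≠ 0) : v ∈ Vs :=
  let ⟨_, hu⟩ := exists_mem_of_dOut_ne_zero hv
  (hE _ hu).1

lemma IsLegal.dOut_eq_one (hG : IsLegal Vs E) (hv : v ∈ InSet Vs E) : dOut E v = 1 :=
  hG.2.2.2.1 v hv

lemma IsLegal.dIn_eq_one (hG : IsLegal Vs E) (hv : v ∈ OutSet Vs E) : dIn E v = 1 :=
  hG.2.2.2.2.1 v hv

lemma IsLegal.dIn_eq_dOut (hG : IsLegal Vs E) (hin : dIn E v ≠ 0) (hout : dOut E v ≠ 0) :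
    dIn E v = dOut E v :=
  hG.2.2.2.2.2 v (mem_of_dIn_ne_zero hG.1 hin) (fun h => hin (mem_filter.mp h).2)
    fun h => hout (mem_filter.mp h).2

lemma IsLegal.dOut_add_ite_eq (hG : IsLegal Vs E) (v : V) :
    dOut E v + (if v ∈ OutSet Vs E then 1 else 0) = dIn E v + if v ∈ InSet Vs E then 1 else 0 := by
  by_cases hin : dIn E v = 0 <;> by_cases hout : dOut E v = 0
  · have hv : v ∉ Vs := fun hv => by
      have := hG.dOut_eq_one (mem_filter.mpr ⟨hv, hin⟩); omega
    simp [InSet, OutSet, hv, hin, hout]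
  · have hv : v ∈ InSet Vs E := mem_filter.mpr ⟨mem_of_dOut_ne_zero hG.1 hout, hin⟩
    have hv' : v ∉ OutSet Vs E := fun h => hout (mem_filter.mp h).2
    simp [hv, hv', hin, hG.dOut_eq_one hv]
  · have hv : v ∈ OutSet Vs E := mem_filter.mpr ⟨mem_of_dIn_ne_zero hG.1 hin, hout⟩
    have hv' : v ∉ InSet Vs E := fun h => hin (mem_filter.mp h).2
    simp [hv, hv', hout, hG.dIn_eq_one hv]
  · have hv : v ∉ InSet Vs E := fun h => hin (mem_filter.mp h).2
    have hv' : v ∉ OutSet Vs E := fun h => hout (mem_filter.mp h).2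
    simp [hv, hv', hG.dIn_eq_dOut hin hout]

theorem IsLegal.card_inSet_eq_card_outSet (hG : IsLegal Vs E) :
    #(InSet Vs E) = #(OutSet Vs E) := by
  have h := sum_congr rfl fun v (_ : v ∈ univ) => hG.dOut_add_ite_eq v
  simp only [sum_add_distrib, sum_dIn, sum_dOut, sum_boole, filter_mem_eq_inter, univ_inter,
    Nat.cast_id] at h
  omega

end Legal

def DegreesKeptOrBalanced (E E' : Finset (V × V)) : Prop :=
  ∀ v, (dIn E' v = dIn E v ∧ dOut E' v = dOut E v) ∨ dIn E' v = dOut E' v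

section Subgraph

variable {Vs : Finset V} {E E' : Finset (V × V)} {v : V}

lemma DegreesKeptOrBalanced.of_mem_inSet (hdeg : DegreesKeptOrBalanced E E')
    (hv : v ∈ InSet (nonIsolated Vs E') E') : dIn E' v = dIn E v ∧ dOut E' v = dOut E v := by
  obtain ⟨hv, hin⟩ := mem_filter.mp hv
  exact (hdeg v).resolve_right fun h => (mem_filter.mp hv).2 ⟨hin, h ▸ hin⟩

lemma DegreesKeptOrBalanced.of_mem_outSet (hdeg : DegreesKeptOrBalanced E E')
    (hv : v ∈ OutSet (nonIsolated Vs E') E') : dIn E' v = dIn E v ∧ dOut E' v = dOut E v := by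
  obtain ⟨hv, hout⟩ := mem_filter.mp hv
  exact (hdeg v).resolve_right fun h => (mem_filter.mp hv).2 ⟨h ▸ hout, hout⟩

lemma inSet_nonIsolated (hsub : E' ⊆ E) (hdeg : DegreesKeptOrBalanced E E') :
    InSet (nonIsolated Vs E') E' = {v ∈ InSet Vs E | dOut E' v ≠ 0} := by
  ext v
  constructor
  · intro hv
    have hkeep := hdeg.of_mem_inSet hv
    obtain ⟨hv, hin⟩ := mem_filter.mp hv
    obtain ⟨hVs, hiso⟩ := mem_filter.mp hv
    exact mem_filter.mpr ⟨mem_filter.mpr ⟨hVs, hkeep.1 ▸ hin⟩, fun h => hiso ⟨hin, h⟩⟩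
  · intro hv
    obtain ⟨hv, hout⟩ := mem_filter.mp hv
    obtain ⟨hVs, hin⟩ := mem_filter.mp hv
    have hin' : dIn E' v = 0 := Nat.eq_zero_of_le_zero (hin ▸ dIn_mono hsub v)
    exact mem_filter.mpr ⟨mem_filter.mpr ⟨hVs, fun h => hout h.2⟩, hin'⟩

lemma outSet_nonIsolated (hsub : E' ⊆ E) (hdeg : DegreesKeptOrBalanced E E') :
    OutSet (nonIsolated Vs E') E' = {v ∈ OutSet Vs E | dIn E' v ≠ 0} := by
  ext v
  constructor
  · intro hv
    have hkeep := hdeg.of_mem_outSet hv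
    obtain ⟨hv, hout⟩ := mem_filter.mp hv
    obtain ⟨hVs, hiso⟩ := mem_filter.mp hv
    exact mem_filter.mpr ⟨mem_filter.mpr ⟨hVs, hkeep.2 ▸ hout⟩, fun h => hiso ⟨h, hout⟩⟩
  · intro hv
    obtain ⟨hv, hin⟩ := mem_filter.mp hv
    obtain ⟨hVs, hout⟩ := mem_filter.mp hv
    have hout' : dOut E' v = 0 := Nat.eq_zero_of_le_zero (hout ▸ dOut_mono hsub v)
    exact mem_filter.mpr ⟨mem_filter.mpr ⟨hVs, fun h => hin h.1⟩, hout'⟩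

theorem IsLegal.of_degreesKeptOrBalanced (hG : IsLegal Vs E) (hsub : E' ⊆ E) (hne : E' ≠ ∅)
    (hdeg : DegreesKeptOrBalanced E E') : IsLegal (nonIsolated Vs E') E' := by
  refine ⟨fun e he => ⟨?_, ?_⟩, hne,
    fun v hv => hG.2.2.1 v (Relation.TransGen.mono (fun _ _ h => hsub h) _ _ hv),
    fun v hv => ?_, fun v hv => ?_, fun v hv hin hout => ?_⟩
  · exact mem_filter.mpr ⟨(hG.1 e (hsub he)).1, fun h => dOut_ne_zero_of_mem he h.2⟩
  · exact mem_filter.mpr ⟨(hG.1 e (hsub he)).2, fun h => dIn_ne_zero_of_mem he h.1⟩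
  · rw [(hdeg.of_mem_inSet hv).2]
    rw [inSet_nonIsolated hsub hdeg] at hv
    exact hG.dOut_eq_one (mem_filter.mp hv).1
  · rw [(hdeg.of_mem_outSet hv).1]
    rw [outSet_nonIsolated hsub hdeg] at hv
    exact hG.dIn_eq_one (mem_filter.mp hv).1
  · have hin : dIn E' v ≠ 0 := fun h => hin (mem_filter.mpr ⟨hv, h⟩)
    have hout : dOut E' v ≠ 0 := fun h => hout (mem_filter.mpr ⟨hv, h⟩)
    rcases hdeg v with ⟨hkeep_in, hkeep_out⟩ | hbal
    · rw [hkeep_in, hkeep_out]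
      exact hG.dIn_eq_dOut (hkeep_in ▸ hin) (hkeep_out ▸ hout)
    · exact hbal

end Subgraph

section Path

lemma List.eq_of_mem_of_not_mem_tail {α : Type*} {p : List α} {u v : α} (hu : p.head? = some u)
    (hv : v ∈ p) (hvt : v ∉ p.tail) : v = u := by
  cases p with
  | nil => simp at hu
  | cons a l =>
    obtain rfl : a = u := by simpa using hu
    exact (List.mem_cons.mp hv).resolve_right hvt

lemma List.eq_of_mem_of_not_mem_dropLast {α : Type*} {p : List α} {w v : α}
    (hw : p.getLast? = some w) (hv : v ∈ p) (hvd : v ∉ p.dropLast) : v = w := by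
  have hp : p ≠ [] := by rintro rfl; simp at hw
  rw [List.getLast?_eq_some_getLast hp, Option.some.injEq] at hw
  rw [← List.dropLast_append_getLast hp, hw] at hv
  simpa [hvd] using hv

lemma pathEdges_cons_cons {α : Type} (a b : α) (l : List α) :
    pathEdges (a :: b :: l) = (a, b) :: pathEdges (b :: l) := rfl

lemma pathEdges_map_snd {α : Type} (p : List α) : (pathEdges p).map Prod.snd = p.tail :=
  List.map_snd_zip (by cases p <;> simp)

lemma pathEdges_map_fst {α : Type} (p : List α) : (pathEdges p).map Prod.fst = p.dropLast := by
  induction p with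
  | nil => rfl
  | cons a q ih => cases q with
    | nil => rfl
    | cons b r => simp [pathEdges_cons_cons, ih]

lemma List.IsChain.forall_mem_pathEdges {α : Type} {R : α → α → Prop} {p : List α}
    (h : p.IsChain R) : ∀ e ∈ pathEdges p, R e.1 e.2 := by
  induction p with
  | nil => simp [pathEdges]
  | cons a q ih => cases q with
    | nil => simp [pathEdges]
    | cons b r =>
      rw [List.isChain_cons_cons] at h
      simpa [pathEdges_cons_cons, h.1] using ih h.2

variable {E : Finset (V × V)} {P : List V} {v : V}

lemma dIn_pathEdges (hP : P.Nodup) (v : V) :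
    dIn (pathEdges P).toFinset v = if v ∈ P.tail then 1 else 0 := by
  rw [dIn_toFinset (by rw [pathEdges_map_snd]; exact hP.sublist (List.tail_sublist P)),
    pathEdges_map_snd]

lemma dOut_pathEdges (hP : P.Nodup) (v : V) :
    dOut (pathEdges P).toFinset v = if v ∈ P.dropLast then 1 else 0 := by
  rw [dOut_toFinset (by rw [pathEdges_map_fst]; exact hP.sublist (List.dropLast_sublist P)),
    pathEdges_map_fst]

lemma IsDiPath.pathEdges_subset {α : Type} [DecidableEq α] {E : Finset (α × α)} {P : List α}
    (hP : IsDiPath E P) : (pathEdges P).toFinset ⊆ E := fun e he =>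
  hP.2.2.forall_mem_pathEdges e (List.mem_toFinset.mp he)

lemma IsDiPath.dIn_sdiff_pathEdges (hP : IsDiPath E P) (v : V) :
    dIn (E \ (pathEdges P).toFinset) v = dIn E v - if v ∈ P.tail then 1 else 0 := by
  rw [dIn_sdiff hP.pathEdges_subset, dIn_pathEdges hP.2.1]

lemma IsDiPath.dOut_sdiff_pathEdges (hP : IsDiPath E P) (v : V) :
    dOut (E \ (pathEdges P).toFinset) v = dOut E v - if v ∈ P.dropLast then 1 else 0 := by
  rw [dOut_sdiff hP.pathEdges_subset, dOut_pathEdges hP.2.1]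

lemma IsDiPath.dIn_ne_zero_of_mem_tail (hP : IsDiPath E P) (hv : v ∈ P.tail) : dIn E v ≠ 0 := by
  have := dIn_mono hP.pathEdges_subset v
  rw [dIn_pathEdges hP.2.1, if_pos hv] at this
  omega

lemma IsDiPath.dOut_ne_zero_of_mem_dropLast (hP : IsDiPath E P) (hv : v ∈ P.dropLast) :
    dOut E v ≠ 0 := by
  have := dOut_mono hP.pathEdges_subset v
  rw [dOut_pathEdges hP.2.1, if_pos hv] at this
  omega

end Path

section DeletePath

variable {Vs : Finset V} {E : Finset (V × V)} {P : List V} {u w : V}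

lemma IsLegal.ne_of_mem_inSet_of_mem_outSet (hG : IsLegal Vs E) (hu : u ∈ InSet Vs E)
    (hw : w ∈ OutSet Vs E) : u ≠ w := by
  rintro rfl
  have := hG.dOut_eq_one hu
  rw [(mem_filter.mp hw).2] at this
  exact zero_ne_one this

lemma IsLegal.degreesKeptOrBalanced_sdiff_pathEdges (hG : IsLegal Vs E) (hP : IsDiPath E P)
    (hu : u ∈ InSet Vs E) (hPu : P.head? = some u)
    (hw : w ∈ OutSet Vs E) (hPw : P.getLast? = some w) :
    DegreesKeptOrBalanced E (E \ (pathEdges P).toFinset) := by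
  intro v
  rw [hP.dIn_sdiff_pathEdges, hP.dOut_sdiff_pathEdges]
  by_cases ht : v ∈ P.tail <;> by_cases hd : v ∈ P.dropLast <;>
    simp only [ht, hd, if_true, if_false]
  · right
    rw [hG.dIn_eq_dOut (hP.dIn_ne_zero_of_mem_tail ht) (hP.dOut_ne_zero_of_mem_dropLast hd)]
  · obtain rfl := List.eq_of_mem_of_not_mem_dropLast hPw (List.mem_of_mem_tail ht) hd
    right
    rw [hG.dIn_eq_one hw, (mem_filter.mp hw).2]
  · obtain rfl := List.eq_of_mem_of_not_mem_tail hPu (List.mem_of_mem_dropLast hd) ht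
    right
    rw [hG.dOut_eq_one hu, (mem_filter.mp hu).2]
  · left
    simp

lemma IsLegal.inSet_sdiff_pathEdges (hG : IsLegal Vs E) (hP : IsDiPath E P)
    (hu : u ∈ InSet Vs E) (hPu : P.head? = some u)
    (hw : w ∈ OutSet Vs E) (hPw : P.getLast? = some w) :
    InSet (nonIsolated Vs (E \ (pathEdges P).toFinset)) (E \ (pathEdges P).toFinset) =
      (InSet Vs E).erase u := by
  have hu_dropLast : u ∈ P.dropLast := by
    by_contra h
    exact hG.ne_of_mem_inSet_of_mem_outSet hu hw
      (List.eq_of_mem_of_not_mem_dropLast hPw (List.mem_of_mem_head? hPu) h)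
  rw [inSet_nonIsolated sdiff_subset
    (hG.degreesKeptOrBalanced_sdiff_pathEdges hP hu hPu hw hPw), ← filter_ne']
  refine filter_congr fun v hv => ?_
  have hv_dropLast : v ∈ P.dropLast ↔ v = u :=
    ⟨fun h => List.eq_of_mem_of_not_mem_tail hPu (List.mem_of_mem_dropLast h)
      fun ht => hP.dIn_ne_zero_of_mem_tail ht (mem_filter.mp hv).2, fun h => h ▸ hu_dropLast⟩
  rw [hP.dOut_sdiff_pathEdges, hG.dOut_eq_one hv]
  by_cases h : v = u <;> simp [hv_dropLast, h, hu_dropLast]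

lemma IsLegal.outSet_sdiff_pathEdges (hG : IsLegal Vs E) (hP : IsDiPath E P)
    (hu : u ∈ InSet Vs E) (hPu : P.head? = some u)
    (hw : w ∈ OutSet Vs E) (hPw : P.getLast? = some w) :
    OutSet (nonIsolated Vs (E \ (pathEdges P).toFinset)) (E \ (pathEdges P).toFinset) =
      (OutSet Vs E).erase w := by
  have hw_tail : w ∈ P.tail := by
    by_contra h
    exact hG.ne_of_mem_inSet_of_mem_outSet hu hw
      (List.eq_of_mem_of_not_mem_tail hPu (List.mem_of_mem_getLast? hPw) h).symm
  rw [outSet_nonIsolated sdiff_subset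
    (hG.degreesKeptOrBalanced_sdiff_pathEdges hP hu hPu hw hPw), ← filter_ne']
  refine filter_congr fun v hv => ?_
  have hv_tail : v ∈ P.tail ↔ v = w :=
    ⟨fun h => List.eq_of_mem_of_not_mem_dropLast hPw (List.mem_of_mem_tail h)
      fun hd => hP.dOut_ne_zero_of_mem_dropLast hd (mem_filter.mp hv).2, fun h => h ▸ hw_tail⟩
  rw [hP.dIn_sdiff_pathEdges, hG.dIn_eq_one hv]
  by_cases h : v = w <;> simp [hv_tail, h, hw_tail]

end DeletePath

/-- Let `G = (Vs, E)` be a legal dag with `|In(G)| = t + 1 ≥ 2`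
and let `P` be a directed path from an input vertex to an output vertex.
Deleting the edges of `P` and then deleting all vertices that have become
isolated yields a legal dag `G'` with `|In(G')| = |Out(G')| = t`. -/
theorem delete_path_legal (Vs : Finset V) (E : Finset (V × V)) (t : ℕ)
    (ht : 1 ≤ t)
    (hlegal : IsLegal Vs E)
    (hcard : (InSet Vs E).card = t + 1)
    (P : List V) (hP : IsDiPath E P)
    (hhead : ∃ u ∈ InSet Vs E, P.head? = some u)
    (hlast : ∃ w ∈ OutSet Vs E, P.getLast? = some w) :
    IsLegal
        (Vs.filter fun v =>
          ¬(dIn (E \ (pathEdges P).toFinset) v = 0 ∧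
            dOut (E \ (pathEdges P).toFinset) v = 0))
        (E \ (pathEdges P).toFinset) ∧
      (InSet
          (Vs.filter fun v =>
            ¬(dIn (E \ (pathEdges P).toFinset) v = 0 ∧
              dOut (E \ (pathEdges P).toFinset) v = 0))
          (E \ (pathEdges P).toFinset)).card = t ∧
      (OutSet
          (Vs.filter fun v =>
            ¬(dIn (E \ (pathEdges P).toFinset) v = 0 ∧
              dOut (E \ (pathEdges P).toFinset) v = 0))
          (E \ (pathEdges P).toFinset)).card = t := by
  obtain ⟨u, hu, hPu⟩ := hhead
  obtain ⟨w, hw, hPw⟩ := hlast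
  have hcard_in : #(InSet (nonIsolated Vs (E \ (pathEdges P).toFinset))
      (E \ (pathEdges P).toFinset)) = t := by
    rw [hlegal.inSet_sdiff_pathEdges hP hu hPu hw hPw, card_erase_of_mem hu, hcard, add_tsub_cancel_right]
  have hcard_out : #(OutSet (nonIsolated Vs (E \ (pathEdges P).toFinset))
      (E \ (pathEdges P).toFinset)) = t := by
    rw [hlegal.outSet_sdiff_pathEdges hP hu hPu hw hPw, card_erase_of_mem hw,
      ← hlegal.card_inSet_eq_card_outSet, hcard, add_tsub_cancel_right]
  obtain ⟨v, hv⟩ := card_pos.mp (hcard_in ▸ ht)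
  exact ⟨hlegal.of_degreesKeptOrBalanced sdiff_subset
    (ne_empty_of_mem_nonIsolated (mem_filter.mp hv).1)
    (hlegal.degreesKeptOrBalanced_sdiff_pathEdges hP hu hPu hw hPw), hcard_in, hcard_out⟩
end

section
/- Let m ≥ 1 and B be positive integers and let a : Fin (3m) → ℕ satisfy B < 4·a(i) and 2·a(i) < B for every i, and Σ_{i} a(i) = m·B. Then the following are equivalent: (1) there exists a partition of Fin (3m) into m blocks, each containing exactly 3 elements, such that the sum of a over every block equals B (a 3-partition solution); (2) there exists a partition of Fin (3m) into at most m blocks such that the sum of a over every block is at most B. (This equivalence is the correctness of the reduction from 3-partition to the graph duplication problem GD(G^0, B, m, 0), where the cluster containing the star gadget of index i contributes a(i) inputs.) -/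
open Finset

/-- Let `m, B ≥ 1` and `a : Fin (3m) → ℕ` with
`B < 4 * a i` and `2 * a i < B` for every `i`, and `∑ i, a i = m * B`.
Then the following are equivalent:
(1) there is a partition of `Fin (3m)` into `m` blocks, each of exactly 3
elements, with the sum of `a` over every block equal to `B` (a 3-partition
solution);
(2) there is a partition of `Fin (3m)` into at most `m` blocks with the sum of
`a` over every block at most `B`.
This is the correctness of the reduction from 3-partition to
`GD(G⁰, B, m, 0)`. -/
theorem three_partition_iff_relaxed (m B : ℕ) (hm : 1 ≤ m) (hB : 1 ≤ B)
    (a : Fin (3 * m) → ℕ)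
    (hlo : ∀ i, B < 4 * a i) (hhi : ∀ i, 2 * a i < B)
    (hsum : ∑ i, a i = m * B) :
    (∃ S : Fin m → Finset (Fin (3 * m)),
        (∀ j j' : Fin m, j ≠ j' → Disjoint (S j) (S j')) ∧
        (∀ i : Fin (3 * m), ∃ j : Fin m, i ∈ S j) ∧
        (∀ j : Fin m, (S j).card = 3) ∧
        (∀ j : Fin m, ∑ i ∈ S j, a i = B)) ↔
    (∃ (p : ℕ) (S : Fin p → Finset (Fin (3 * m))),
        p ≤ m ∧
        (∀ j j' : Fin p, j ≠ j' → Disjoint (S j) (S j')) ∧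
        (∀ i : Fin (3 * m), ∃ j : Fin p, i ∈ S j) ∧
        (∀ j : Fin p, ∑ i ∈ S j, a i ≤ B)) := by
  
  constructor
  · rintro ⟨S, h1, h2, h3, h4⟩
    exact ⟨m, S, le_refl m, h1, h2, fun j => (h4 j).le⟩
  · rintro ⟨p, S, hp, hdisj, hcov, hle⟩
    have hunion : (Finset.univ : Finset (Fin p)).biUnion S = Finset.univ := by
      ext i
      simp only [Finset.mem_biUnion, Finset.mem_univ, true_and, iff_true]
      exact hcov i
    have htot : ∑ j, ∑ i ∈ S j, a i = m * B := by
      rw [← Finset.sum_biUnion (fun x _ y _ hxy => hdisj x y hxy), hunion, hsum]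
    have hpB : m * B ≤ p * B := by
      calc m * B = ∑ j, ∑ i ∈ S j, a i := htot.symm
        _ ≤ ∑ _j : Fin p, B := Finset.sum_le_sum fun j _ => hle j
        _ = p * B := by simp [mul_comm]
    have hpm : p = m := le_antisymm hp (Nat.le_of_mul_le_mul_right hpB hB)
    have hexact : ∀ j, ∑ i ∈ S j, a i = B := by
      by_contra h
      push_neg at h
      obtain ⟨j0, hj0⟩ := h
      have hlt : ∑ j, ∑ i ∈ S j, a i < ∑ _j : Fin p, B :=
        Finset.sum_lt_sum (fun j _ => hle j)
          ⟨j0, Finset.mem_univ j0, lt_of_le_of_ne (hle j0) hj0⟩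
      rw [htot] at hlt
      simp only [Finset.sum_const, Finset.card_univ, Fintype.card_fin, smul_eq_mul, hpm] at hlt
      exact lt_irrefl _ hlt
    have hcard : ∀ j, (S j).card = 3 := by
      intro j
      have hne : (S j).Nonempty := by
        rcases Finset.eq_empty_or_nonempty (S j) with h | h
        · exfalso
          have := hexact j
          rw [h, Finset.sum_empty] at this
          omega
        · exact h
      have h1 : 2 * B < (S j).card * B := by
        calc 2 * B = ∑ i ∈ S j, 2 * a i := by rw [← Finset.mul_sum, hexact j]
          _ < ∑ _i ∈ S j, B := Finset.sum_lt_sum_of_nonempty hne fun i _ => hhi i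
          _ = (S j).card * B := by simp [mul_comm]
      have h2 : (S j).card * B < 4 * B := by
        calc (S j).card * B = ∑ _i ∈ S j, B := by simp [mul_comm]
          _ < ∑ i ∈ S j, 4 * a i := Finset.sum_lt_sum_of_nonempty hne fun i _ => hlo i
          _ = 4 * B := by rw [← Finset.mul_sum, hexact j]
      have hc1 : 2 < (S j).card := lt_of_mul_lt_mul_right h1 (Nat.zero_le B)
      have hc2 : (S j).card < 4 := lt_of_mul_lt_mul_right h2 (Nat.zero_le B)
      omega
    subst hpm
    exact ⟨S, hdisj, hcov, hcard, hexact⟩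
end

section
/- Let m ≥ 1 and B be positive integers and let a : Fin (3m) → ℕ satisfy B < 4·a(i) and 2·a(i) < B for every i, and Σ_{i} a(i) = m·B. If {S_1, …, S_p} is a partition of Fin (3m) into p ≤ m blocks such that Σ_{i ∈ S_j} (a(i) + 1) ≤ B + 3 for every j, then p = m, every block S_j contains exactly 3 elements, and Σ_{i ∈ S_j} a(i) = B for every j. (This is the key counting lemma in the converse direction of the NP-completeness proof for connected 2-legal tree dags, Theorem 7, where the component with inputs In_i contributes a(i) + 1 inputs and each cluster may have at most B + 3 inputs.) -/
open Finset

/-- Let `m, B ≥ 1` and `a : Fin (3m) → ℕ` with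
`B < 4 * a i` and `2 * a i < B` for every `i`, and `∑ i, a i = m * B`.
If `S₁, …, S_p` is a partition of `Fin (3m)` into `p ≤ m` pairwise disjoint
blocks covering `Fin (3m)` such that `∑_{i ∈ S_j} (a i + 1) ≤ B + 3` for every
`j`, then `p = m`, every block has exactly 3 elements, and
`∑_{i ∈ S_j} a i = B` for every `j`. -/
theorem partition_plus_one_forces_three_partition (m B : ℕ)
    (hm : 1 ≤ m) (hB : 1 ≤ B)
    (a : Fin (3 * m) → ℕ)
    (hlo : ∀ i, B < 4 * a i) (hhi : ∀ i, 2 * a i < B)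
    (hsum : ∑ i, a i = m * B)
    (p : ℕ) (S : Fin p → Finset (Fin (3 * m)))
    (hdisj : ∀ j j' : Fin p, j ≠ j' → Disjoint (S j) (S j'))
    (hcover : ∀ i : Fin (3 * m), ∃ j : Fin p, i ∈ S j)
    (hp : p ≤ m)
    (hle : ∀ j : Fin p, ∑ i ∈ S j, (a i + 1) ≤ B + 3) :
    p = m ∧ (∀ j : Fin p, (S j).card = 3) ∧
      ∀ j : Fin p, ∑ i ∈ S j, a i = B := by
  classical
  have hunion : (Finset.univ : Finset (Fin p)).biUnion S = Finset.univ := by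
    ext i
    simp only [Finset.mem_biUnion, Finset.mem_univ, true_and, iff_true]
    exact hcover i
  have hsplit : ∑ j, ∑ i ∈ S j, (a i + 1) = ∑ i, (a i + 1) := by
    rw [← hunion, Finset.sum_biUnion]
    intro j _ j' _ hjj'
    exact hdisj j j' hjj'
  have htot : ∑ i, (a i + 1) = m * B + 3 * m := by
    rw [Finset.sum_add_distrib, hsum, Finset.sum_const, Finset.card_univ,
      Fintype.card_fin, smul_eq_mul, mul_one]
  have hub : ∑ j, ∑ i ∈ S j, (a i + 1) ≤ p * (B + 3) := by
    calc ∑ j, ∑ i ∈ S j, (a i + 1) ≤ ∑ _j : Fin p, (B + 3) :=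
          Finset.sum_le_sum (fun j _ => hle j)
      _ = p * (B + 3) := by
          rw [Finset.sum_const, Finset.card_univ, Fintype.card_fin, smul_eq_mul]
  have hpm : p = m := by
    by_contra h
    have hplt : p < m := lt_of_le_of_ne hp h
    have h1 : p * (B + 3) < m * (B + 3) :=
      Nat.mul_lt_mul_of_lt_of_le hplt le_rfl (by omega)
    have h2 := hub
    rw [hsplit, htot] at h2
    nlinarith
  have hsum_eq : ∑ j, ∑ i ∈ S j, (a i + 1) = p * (B + 3) := by
    rw [hsplit, htot, hpm]; ring
  have heach : ∀ j : Fin p, ∑ i ∈ S j, (a i + 1) = B + 3 := by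
    intro j
    by_contra h
    have hlt : ∑ i ∈ S j, (a i + 1) < B + 3 := lt_of_le_of_ne (hle j) h
    have : ∑ j', ∑ i ∈ S j', (a i + 1) < ∑ _j' : Fin p, (B + 3) :=
      Finset.sum_lt_sum (fun j' _ => hle j') ⟨j, Finset.mem_univ j, hlt⟩
    rw [Finset.sum_const, Finset.card_univ, Fintype.card_fin, smul_eq_mul] at this
    omega
  have key : ∀ j : Fin p, (S j).card = 3 ∧ ∑ i ∈ S j, a i = B := by
    intro j
    set c := (S j).card with hc
    set s := ∑ i ∈ S j, a i with hs
    have h3 : s + c = B + 3 := by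
      have := heach j
      rw [Finset.sum_add_distrib, Finset.sum_const, smul_eq_mul, mul_one] at this
      omega
    have h1 : c * (B + 1) ≤ 4 * s := by
      calc c * (B + 1) = ∑ _i ∈ S j, (B + 1) := by
            rw [Finset.sum_const, smul_eq_mul]
        _ ≤ ∑ i ∈ S j, 4 * a i := Finset.sum_le_sum (fun i _ => by have := hlo i; omega)
        _ = 4 * s := by rw [hs, Finset.mul_sum]
    have h2 : 2 * s + c ≤ c * B := by
      calc 2 * s + c = ∑ i ∈ S j, (2 * a i + 1) := by
            rw [Finset.sum_add_distrib, ← Finset.mul_sum, Finset.sum_const,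
              smul_eq_mul, mul_one, hs]
        _ ≤ ∑ _i ∈ S j, B := Finset.sum_le_sum (fun i _ => by have := hhi i; omega)
        _ = c * B := by rw [Finset.sum_const, smul_eq_mul]
    have hc3 : c = 3 := by
      rcases Nat.lt_or_ge c 3 with h | h
      · exfalso
        have : c * B ≤ 2 * B := Nat.mul_le_mul_right B (by omega)
        omega
      · rcases Nat.lt_or_ge c 4 with h4 | h4
        · omega
        · exfalso
          have : 4 * (B + 1) ≤ c * (B + 1) := Nat.mul_le_mul_right _ h4
          omega
    exact ⟨hc3, by omega⟩
  exact ⟨hpm, fun j => (key j).1, fun j => (key j).2⟩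
end
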